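/- For ψ > 0 and any integer k ≥ 0, ∫_ℝ e^{-ψπ²x² - 2πi x u} x^k dx = (1 / ((2πi)^k √π ψ^{(k+1)/2})) · e^{-u²/ψ} · H_k(u/√ψ), where H_k is the k-th Hermite polynomial. -/

import Mathlib

/-!
Differentiating the Fourier transform of the Gaussian `exp (-ψπ²x²)` `k` times in the frequency
brings the factor `(-2πix)^k` under the integral. That Fourier transform is the Gaussian
`(πψ)^(-1/2) exp (-u²/ψ)`, and the Rodrigues formula defining `H_k`, together with the chain rule,
gives its `k`-th derivative as `(-1/√ψ)^k (πψ)^(-1/2) exp (-u²/ψ) H_k (u/√ψ)`.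
-/

open Complex

/-- The physicists' Hermite polynomial `H n x = (-1)^n e^{x^2} (d/dx)^n e^{-x^2}`. -/
noncomputable def hermiteFun (n : ℕ) (x : ℝ) : ℝ :=
  (-1 : ℝ) ^ n * Real.exp (x ^ 2) * iteratedDeriv n (fun t : ℝ => Real.exp (-t ^ 2)) x

open MeasureTheory Real FourierTransform

theorem ContinuousLinearMap.iteratedDeriv_comp_left {𝕜 F G : Type*} [NontriviallyNormedField 𝕜]
    [NormedAddCommGroup F] [NormedSpace 𝕜 F] [NormedAddCommGroup G] [NormedSpace 𝕜 G]
    (L : F →L[𝕜] G) {f : 𝕜 → F} {x : 𝕜} {n : WithTop ℕ∞} (hf : ContDiffAt 𝕜 n f x) {i : ℕ}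
    (hi : i ≤ n) : iteratedDeriv i (L ∘ f) x = L (iteratedDeriv i f x) := by
  simp [iteratedDeriv_eq_iteratedFDeriv, L.iteratedFDeriv_comp_left hf hi]

theorem iteratedDeriv_exp_neg_sq (n : ℕ) (x : ℝ) :
    iteratedDeriv n (fun t => rexp (-t ^ 2)) x = (-1) ^ n * rexp (-x ^ 2) * hermiteFun n x := by
  have hsign : ((-1 : ℝ) ^ n) ^ 2 = 1 := by rw [← pow_mul, pow_mul']; simp
  have hexp : rexp (-x ^ 2) * rexp (x ^ 2) = 1 := by rw [← Real.exp_add]; simp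
  rw [hermiteFun]
  linear_combination
    -iteratedDeriv n (fun t => rexp (-t ^ 2)) x * (hsign * rexp (-x ^ 2) * rexp (x ^ 2) + hexp)

theorem iteratedDeriv_exp_neg_div_sq (n : ℕ) (s u : ℝ) :
    iteratedDeriv n (fun t => rexp (-(t / s) ^ 2)) u
      = (-s⁻¹) ^ n * rexp (-(u / s) ^ 2) * hermiteFun n (u / s) := by
  have hsmooth : ContDiff ℝ n (fun t : ℝ => rexp (-t ^ 2)) := by fun_prop
  simp_rw [div_eq_inv_mul]
  rw [iteratedDeriv_comp_const_mul hsmooth]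
  dsimp only
  rw [iteratedDeriv_exp_neg_sq, neg_pow s⁻¹]
  ring

theorem integrable_pow_smul_exp_neg_mul_sq {b : ℝ} (hb : 0 < b) (n : ℕ) :
    Integrable (fun x : ℝ => x ^ n • (rexp (-b * x ^ 2) : ℂ)) := by
  have hreal := integrable_rpow_mul_exp_neg_mul_sq hb (s := n) (by linarith [n.cast_nonneg (α := ℝ)])
  simpa [Real.rpow_natCast, real_smul] using hreal.ofReal (𝕜 := ℂ)

theorem fourier_exp_neg_mul_pi_sq_mul_sq {ψ : ℝ} (hψ : 0 < ψ) :
    𝓕 (fun x : ℝ => (rexp (-(ψ * π ^ 2) * x ^ 2) : ℂ))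
      = fun u => (((√π * √ψ)⁻¹ * rexp (-(u / √ψ) ^ 2) : ℝ) : ℂ) := by
  have h := fourier_gaussian_pi (b := ((ψ * π : ℝ) : ℂ)) (by simpa using mul_pos hψ pi_pos)
  have hsqrt : ((ψ * π : ℝ) : ℂ) ^ (1 / 2 : ℂ) = ((√π * √ψ : ℝ) : ℂ) := by
    rw [← Real.sqrt_mul' _ hψ.le, mul_comm π, Real.sqrt_eq_rpow, Complex.ofReal_cpow (by positivity)]
    norm_num
  convert h using 3 with x u
  · push_cast; ring_nf
  · rw [hsqrt, div_pow, Real.sq_sqrt hψ.le]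
    have : √ψ ≠ 0 := by positivity
    push_cast
    field_simp

theorem integral_gaussian_mul_pow_eq_iteratedDeriv_fourier {b : ℝ} (hb : 0 < b) (k : ℕ) (u : ℝ) :
    (-2 * π * I) ^ k * ∫ x : ℝ, cexp (-(b * x ^ 2) - 2 * π * I * x * u) * (x : ℂ) ^ k
      = iteratedDeriv k (𝓕 fun x : ℝ => (rexp (-b * x ^ 2) : ℂ)) u := by
  rw [iteratedDeriv_fourier (N := ⊤) (fun n _ => integrable_pow_smul_exp_neg_mul_sq hb n) le_top,
    fourier_real_eq_integral_exp_smul, ← integral_const_mul]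
  congr 1 with x
  have hexp : cexp (-(b * x ^ 2) - 2 * π * I * x * u)
      = cexp (↑(-2 * π * x * u) * I) * (rexp (-b * x ^ 2) : ℂ) := by
    rw [ofReal_exp, ← Complex.exp_add]; push_cast; ring_nf
  rw [hexp, smul_eq_mul]
  ring

theorem stmt1 (ψ : ℝ) (hψ : 0 < ψ) (k : ℕ) (u : ℝ) :
    (∫ x : ℝ, Complex.exp (-((ψ : ℂ) * (Real.pi : ℂ) ^ 2 * (x : ℂ) ^ 2)
        - 2 * (Real.pi : ℂ) * Complex.I * (x : ℂ) * (u : ℂ)) * (x : ℂ) ^ k)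
      = (1 / ((2 * (Real.pi : ℂ) * Complex.I) ^ k * (Real.sqrt Real.pi : ℂ)
            * ((Real.sqrt ψ : ℝ) : ℂ) ^ (k + 1)))
        * (Real.exp (-u ^ 2 / ψ) : ℂ) * ((hermiteFun k (u / Real.sqrt ψ) : ℝ) : ℂ) := by
  have hmoment :=
    integral_gaussian_mul_pow_eq_iteratedDeriv_fourier (b := ψ * π ^ 2) (by positivity) k u
  have hderiv : iteratedDeriv k (fun u => (((√π * √ψ)⁻¹ * rexp (-(u / √ψ) ^ 2) : ℝ) : ℂ)) u
      = (((√π * √ψ)⁻¹ * ((-(√ψ)⁻¹) ^ k * rexp (-(u / √ψ) ^ 2) * hermiteFun k (u / √ψ)) : ℝ) : ℂ) := by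
    rw [← iteratedDeriv_exp_neg_div_sq, ← iteratedDeriv_const_mul_field]
    exact ofRealCLM.iteratedDeriv_comp_left (f := fun u => (√π * √ψ)⁻¹ * rexp (-(u / √ψ) ^ 2))
      (n := k) (by fun_prop) le_rfl
  have hsq : -(u / √ψ) ^ 2 = -u ^ 2 / ψ := by rw [div_pow, Real.sq_sqrt hψ.le, neg_div]
  rw [fourier_exp_neg_mul_pi_sq_mul_sq hψ, hderiv, hsq] at hmoment
  push_cast at hmoment
  have hψ' : (√ψ : ℂ) ≠ 0 := by exact_mod_cast (Real.sqrt_pos.mpr hψ).ne'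
  have hπ' : (√π : ℂ) ≠ 0 := by exact_mod_cast (Real.sqrt_pos.mpr pi_pos).ne'
  have hA : (-2 * π * I : ℂ) ≠ 0 := by simp [pi_ne_zero, I_ne_zero]
  apply mul_left_cancel₀ (pow_ne_zero k hA)
  rw [hmoment, show (-2 * π * I : ℂ) = -1 * (2 * π * I) by ring, mul_pow, neg_pow (√ψ : ℂ)⁻¹,
    inv_pow]
  push_cast
  field_simp
  ring
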